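/- arXiv:2203.12518 — 2 statements merged into one kernel-verified Lean document; each statement's English description precedes it below -/
import Mathlib

section
/- Let G be a group with finite generating set X whose isoperimetric spectrum is linear, i.e., f_{G,X}(k,m,n) ∼ n/m. Then there exists a constant D > 0 with the following property: if p is a geodesic path in Cay(G,X), o is a vertex on p, and q is a path with q_- = p_-, q_+ = p_+ that does not intersect the closed r-neighborhood of o for some r ≥ 0 (an r-detour of o), and if the word labelling the loop p q^{-1} belongs to the normal closure ⟪S_k⟫ for some k ∈ ℕ, then the length of q satisfies ℓ(q) ≥ D·(r/k)². -/
open Function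

namespace IsoSpecPaper

variable {ι : Type*} {G : Type*} [Group G]

/-- The (reduced) length of an element of a free group. -/
noncomputable def wnorm (w : FreeGroup ι) : ℕ :=
  @FreeGroup.norm ι (Classical.decEq ι) w

/-- `triv φ k` : the set of words of length at most `k` in the generators
(and their inverses) representing the identity of `G` under the marking `φ`. -/
noncomputable def triv (φ : FreeGroup ι →* G) (k : ℕ) : Set (FreeGroup ι) :=
  {w | wnorm w ≤ k ∧ φ w = 1}

/-- `AreaLe R w l` : `w` is a product of `l` conjugates of elements of `R` or
their inverses in the free group. -/
def AreaLe (R : Set (FreeGroup ι)) (w : FreeGroup ι) (l : ℕ) : Prop :=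
  ∃ L : List (FreeGroup ι × FreeGroup ι), L.length = l ∧
    (∀ p ∈ L, p.2 ∈ R ∨ p.2⁻¹ ∈ R) ∧
    w = (L.map fun p => p.1⁻¹ * p.2 * p.1).prod

/-- The area of `w` with respect to the set of relators `R`. -/
noncomputable def area (R : Set (FreeGroup ι)) (w : FreeGroup ι) : ℕ :=
  sInf {l | AreaLe R w l}

/-- The isoperimetric spectrum of the marked group `(G, φ)`:
`isoSpec φ k m n = max { area_{S_m}(w) : w ∈ ⟪S_k⟫, ‖w‖ ≤ n }`. -/
noncomputable def isoSpec (φ : FreeGroup ι →* G) (k m n : ℕ) : ℕ :=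
  sSup (area (triv φ m) '' {w | w ∈ Subgroup.normalClosure (triv φ k) ∧ wnorm w ≤ n})

/-- The real-valued isoperimetric spectrum. -/
noncomputable def isoSpecR (φ : FreeGroup ι →* G) : ℕ → ℕ → ℕ → ℝ :=
  fun k m n => (isoSpec φ k m n : ℝ)

/-- The Dehn function of the presentation with relators `R`. -/
noncomputable def dehn (R : Set (FreeGroup ι)) (n : ℕ) : ℕ :=
  sSup (area R '' {w | w ∈ Subgroup.normalClosure R ∧ wnorm w ≤ n})

/-- The quasi-order `f ≼ g` on functions of triples `(k,m,n)` of positive integers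
with `m ≥ k`. -/
def SpecLE (f g : ℕ → ℕ → ℕ → ℝ) : Prop :=
  ∃ C : ℕ, 0 < C ∧ ∀ k m n : ℕ, 0 < k → 0 < m → 0 < n → C * k ≤ m →
    f k (C * m) n ≤ C * g (C * k) m (C * n) + C * (n : ℝ) / m + C

/-- Equivalence of isoperimetric functions: `f ∼ g`. -/
def SpecEquiv (f g : ℕ → ℕ → ℕ → ℝ) : Prop := SpecLE f g ∧ SpecLE g f

/-- The linear spectrum `(k,m,n) ↦ n/m`. -/
noncomputable def linSpec : ℕ → ℕ → ℕ → ℝ := fun _ m n => (n : ℝ) / m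

/-- The word length of `g ∈ G` with respect to the marking `φ`. -/
noncomputable def wlen (φ : FreeGroup ι →* G) (g : G) : ℕ :=
  sInf {n | ∃ w : FreeGroup ι, wnorm w = n ∧ φ w = g}

/-- The word metric on `G` with respect to the marking `φ`. -/
noncomputable def wdist (φ : FreeGroup ι →* G) (g h : G) : ℕ := wlen φ (g⁻¹ * h)

/-- Quasi-isometry of marked groups with respect to their word metrics. -/
noncomputable def QuasiIsometric {H : Type*} [Group H] {κ : Type*}
    (φ : FreeGroup ι →* G) (ψ : FreeGroup κ →* H) : Prop :=
  ∃ L : ℝ, 0 ≤ L ∧ ∃ (α : G → H) (β : H → G),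
    (∀ x y : G, (wdist ψ (α x) (α y) : ℝ) ≤ L * wdist φ x y + L) ∧
    (∀ u v : H, (wdist φ (β u) (β v) : ℝ) ≤ L * wdist ψ u v + L) ∧
    (∀ t : H, (wdist ψ (α (β t)) t : ℝ) ≤ L) ∧
    (∀ s : G, (wdist φ (β (α s)) s : ℝ) ≤ L)

/-- A (combinatorial) geodesic path of length `n` in the Cayley graph of `(G, φ)`:
consecutive vertices are at distance at most `1` and the endpoints are at
distance exactly `n`. -/
noncomputable def IsGeodesic (φ : FreeGroup ι →* G) {n : ℕ} (p : Fin (n + 1) → G) : Prop :=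
  (∀ i : Fin n, wdist φ (p i.castSucc) (p i.succ) ≤ 1) ∧
  wdist φ (p 0) (p (Fin.last n)) = n

/-- Every vertex of the path `p` lies within distance `δ` of the set `A`. -/
noncomputable def ThinAt (φ : FreeGroup ι →* G) (δ : ℝ) {n : ℕ}
    (p : Fin (n + 1) → G) (A : Set G) : Prop :=
  ∀ i, ∃ a ∈ A, (wdist φ (p i) a : ℝ) ≤ δ

/-- The Cayley graph of `(G, φ)` is `δ`-hyperbolic: every geodesic triangle is `δ`-thin. -/
noncomputable def HypConst (φ : FreeGroup ι →* G) (δ : ℝ) : Prop :=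
  ∀ (n₁ n₂ n₃ : ℕ) (p : Fin (n₁ + 1) → G) (q : Fin (n₂ + 1) → G) (r : Fin (n₃ + 1) → G),
    IsGeodesic φ p → IsGeodesic φ q → IsGeodesic φ r →
    p (Fin.last n₁) = q 0 → q (Fin.last n₂) = r 0 → r (Fin.last n₃) = p 0 →
    ThinAt φ δ p (Set.range q ∪ Set.range r) ∧
    ThinAt φ δ q (Set.range r ∪ Set.range p) ∧
    ThinAt φ δ r (Set.range p ∪ Set.range q)

/-- The marked group `(G, φ)` is hyperbolic. -/
noncomputable def IsHyperbolic (φ : FreeGroup ι →* G) : Prop :=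
  ∃ δ : ℝ, 0 ≤ δ ∧ HypConst φ δ

/-- `G` (marked by `φ`) is a limit (direct limit) of hyperbolic groups. -/
noncomputable def LimitOfHyperbolic (φ : FreeGroup ι →* G) : Prop :=
  Surjective φ ∧ ∃ R : ℕ → Set (FreeGroup ι),
    (∀ i j, i ≤ j → R i ⊆ R j) ∧
    φ.ker = Subgroup.normalClosure (⋃ i, R i) ∧
    ∀ i, IsHyperbolic (QuotientGroup.mk' (Subgroup.normalClosure (R i)))

/-- `G` (marked by `φ`) is well-approximated by hyperbolic groups. -/
noncomputable def WellApproximated (φ : FreeGroup ι →* G) : Prop :=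
  Surjective φ ∧ ∃ R : ℕ → Set (FreeGroup ι),
    (∀ i j, i ≤ j → R i ⊆ R j) ∧
    φ.ker = Subgroup.normalClosure (⋃ i, R i) ∧
    (∀ i, IsHyperbolic (QuotientGroup.mk' (Subgroup.normalClosure (R i)))) ∧
    ∃ C : ℕ, 0 < C ∧ ∀ i : ℕ, 0 < i →
      (∀ w : FreeGroup ι, wnorm w ≤ i → φ w = 1 →
        w ∈ Subgroup.normalClosure (R i)) ∧
      HypConst (QuotientGroup.mk' (Subgroup.normalClosure (R i))) ((C * i : ℕ) : ℝ)

/-- The set of vertices visited by the path starting at `x` labelled by the word `L`. -/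
noncomputable def pathVerts {G : Type*} [Group G] {ι : Type*}
    (φ : FreeGroup ι →* G) (x : G) (L : List (ι × Bool)) : Set G :=
  {g | ∃ i ≤ L.length, g = x * φ (FreeGroup.mk (L.take i))}

/-!
Fill the loop `p q⁻¹` by relators of length at most `M = C²k`; linearity of the spectrum
makes the number `ℓ` of relators at most of order `n/k`, where `n = ℓ(p) + ℓ(q) ≤ 2ℓ(q)`.
For every level `s < r` consider the antisymmetric edge weight that vanishes except on edges
crossing the sphere of radius `s + 1` about `o`, where it is `±` the distance from `a_s` to the
endpoint nearer to `o`; here `a_s` is the vertex of `p` at distance `s` before `o`.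
Its sum along a word only depends on the element of the free group, so summed over the
boundary it equals the sum over the relator loops of the filling. On the boundary, `q`
stays outside the `r`-ball about `o`, and the geodesic `p` crosses the sphere once inwards
(at `a_s`, weight `0`) and once outwards (at distance `2s` from `a_s`): the levels give
`∑ 2s ≈ r²`. On a relator loop of length `N` each weight may be taken `≤ N` and each edge
crosses at most one sphere, so all levels together give at most `N²`. Hence
`r² ≲ ℓ M² ≲ n k`, that is `ℓ(q) ≳ (r/k)²`.
-/

section WordMetric

variable (φ : FreeGroup ι →* G)

lemma wnorm_mul_le (u v : FreeGroup ι) : wnorm (u * v) ≤ wnorm u + wnorm v :=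
  @FreeGroup.norm_mul_le _ (Classical.decEq ι) u v

lemma wnorm_inv (u : FreeGroup ι) : wnorm u⁻¹ = wnorm u :=
  @FreeGroup.norm_inv_eq _ (Classical.decEq ι) u

lemma wnorm_mk_le (L : List (ι × Bool)) : wnorm (FreeGroup.mk L) ≤ L.length :=
  @FreeGroup.norm_mk_le _ L (Classical.decEq ι)

lemma wnorm_eq_length_toWord [DecidableEq ι] (u : FreeGroup ι) : wnorm u = u.toWord.length := by
  rw [wnorm, Subsingleton.elim (Classical.decEq ι) ‹_›]
  rfl

lemma wlen_le_wnorm (u : FreeGroup ι) : wlen φ (φ u) ≤ wnorm u :=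
  Nat.sInf_le ⟨u, rfl, rfl⟩

lemma wdist_mul_le (g : G) (u : FreeGroup ι) : wdist φ g (g * φ u) ≤ wnorm u := by
  simpa [wdist] using wlen_le_wnorm φ u

variable {φ} (hφ : Surjective φ)
include hφ

lemma exists_wnorm_eq_wlen (g : G) : ∃ u : FreeGroup ι, wnorm u = wlen φ g ∧ φ u = g :=
  Nat.sInf_mem (s := {n | ∃ u, wnorm u = n ∧ φ u = g}) <|
    let ⟨u, hu⟩ := hφ g; ⟨wnorm u, u, rfl, hu⟩

lemma wlen_mul_le (g h : G) : wlen φ (g * h) ≤ wlen φ g + wlen φ h := by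
  obtain ⟨u, hu, rfl⟩ := exists_wnorm_eq_wlen hφ g
  obtain ⟨v, hv, rfl⟩ := exists_wnorm_eq_wlen hφ h
  rw [← hu, ← hv, ← map_mul]
  exact (wlen_le_wnorm φ _).trans (wnorm_mul_le u v)

lemma wlen_inv_le (g : G) : wlen φ g⁻¹ ≤ wlen φ g := by
  obtain ⟨u, hu, rfl⟩ := exists_wnorm_eq_wlen hφ g
  rw [← hu, ← map_inv, ← wnorm_inv]
  exact wlen_le_wnorm φ _

lemma wdist_comm (g h : G) : wdist φ g h = wdist φ h g := by
  refine le_antisymm ?_ ?_ <;> simpa [wdist] using wlen_inv_le hφ (_⁻¹ * _)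

lemma wdist_triangle (g h k : G) : wdist φ g k ≤ wdist φ g h + wdist φ h k := by
  simpa [wdist, mul_assoc] using wlen_mul_le hφ (g⁻¹ * h) (h⁻¹ * k)

lemma abs_wdist_sub_wdist_le (a g h : G) :
    |(wdist φ a g : ℤ) - wdist φ a h| ≤ wdist φ g h := by
  have h₁ := wdist_triangle hφ a g h
  have h₂ := wdist_triangle hφ a h g
  rw [wdist_comm hφ h g] at h₂
  rw [abs_sub_le_iff]
  constructor <;> omega

end WordMetric

section Paths

variable (φ : FreeGroup ι →* G)

noncomputable def pathVertex (x : G) (L : List (ι × Bool)) (j : ℕ) : G :=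
  x * φ (FreeGroup.mk (L.take j))

variable {φ} {x : G} {L L₁ L₂ : List (ι × Bool)} {i j : ℕ}

@[simp]
lemma pathVertex_zero : pathVertex φ x L 0 = x := by
  simp [pathVertex, ← FreeGroup.one_eq_mk]

@[simp]
lemma pathVertex_length : pathVertex φ x L L.length = x * φ (FreeGroup.mk L) := by
  simp [pathVertex]

lemma pathVertex_mem_pathVerts (hj : j ≤ L.length) : pathVertex φ x L j ∈ pathVerts φ x L :=
  ⟨j, hj, rfl⟩

lemma pathVertex_append_of_le (hj : j ≤ L₁.length) :
    pathVertex φ x (L₁ ++ L₂) j = pathVertex φ x L₁ j := by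
  rw [pathVertex, List.take_append_of_le_length hj, pathVertex]

lemma pathVertex_append_length_add :
    pathVertex φ x (L₁ ++ L₂) (L₁.length + j) = pathVertex φ (x * φ (FreeGroup.mk L₁)) L₂ j := by
  rw [pathVertex, List.take_length_add_append, ← FreeGroup.mul_mk, map_mul, ← mul_assoc,
    pathVertex]

lemma wdist_pathVertex_le (hij : i ≤ j) :
    wdist φ (pathVertex φ x L i) (pathVertex φ x L j) ≤ j - i := by
  have hsplit : L.take j = L.take i ++ (L.take j).drop i := by
    conv_lhs => rw [← List.take_append_drop i (L.take j)]
    rw [List.take_take, min_eq_left hij]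
  rw [pathVertex, pathVertex, hsplit, ← FreeGroup.mul_mk, map_mul, ← mul_assoc]
  refine (wdist_mul_le φ _ _).trans ((wnorm_mk_le _).trans ?_)
  simp only [List.length_drop, List.length_take]
  omega

lemma wdist_pathVertex_of_geodesic (hφ : Surjective φ)
    (hgeo : wlen φ (φ (FreeGroup.mk L)) = L.length) (hi : i ≤ L.length) (hj : j ≤ L.length) :
    wdist φ (pathVertex φ x L i) (pathVertex φ x L j) = i - j + (j - i) := by
  have hends : wdist φ (pathVertex φ x L 0) (pathVertex φ x L L.length) = L.length := by
    simpa [wdist] using hgeo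
  have key : ∀ i j, i ≤ j → j ≤ L.length →
      wdist φ (pathVertex φ x L i) (pathVertex φ x L j) = j - i := by
    intro i j hij hj
    have h₁ := wdist_triangle hφ (pathVertex φ x L 0) (pathVertex φ x L i) (pathVertex φ x L j)
    have h₂ := wdist_triangle hφ (pathVertex φ x L 0) (pathVertex φ x L j)
      (pathVertex φ x L L.length)
    have := wdist_pathVertex_le (φ := φ) (x := x) (L := L) (Nat.zero_le i)
    have := wdist_pathVertex_le (φ := φ) (x := x) (L := L) hij
    have := wdist_pathVertex_le (φ := φ) (x := x) (L := L) hj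
    omega
  rcases le_total i j with hij | hji
  · rw [key i j hij hj]; omega
  · rw [wdist_comm hφ, key j i hji hi]; omega

lemma length_le_length_of_geodesic {Lp Lq : List (ι × Bool)}
    (hgeo : wlen φ (φ (FreeGroup.mk Lp)) = Lp.length)
    (hq : φ (FreeGroup.mk Lq) = φ (FreeGroup.mk Lp)) : Lp.length ≤ Lq.length :=
  hgeo ▸ hq ▸ (wlen_le_wnorm φ _).trans (wnorm_mk_le Lq)

end Paths

section PathSum

variable (φ : FreeGroup ι →* G) {A : Type*} [AddCommGroup A] (W : G → G → A)

noncomputable def pathSum (x : G) (L : List (ι × Bool)) : A :=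
  ∑ j ∈ Finset.range L.length, W (pathVertex φ x L j) (pathVertex φ x L (j + 1))

variable {φ W}

lemma pathSum_append (x : G) (L₁ L₂ : List (ι × Bool)) :
    pathSum φ W x (L₁ ++ L₂) = pathSum φ W x L₁ + pathSum φ W (x * φ (FreeGroup.mk L₁)) L₂ := by
  rw [pathSum, List.length_append, Finset.sum_range_add]
  congr 1
  · refine Finset.sum_congr rfl fun j hj => ?_
    have hj := Finset.mem_range.mp hj
    rw [pathVertex_append_of_le hj.le, pathVertex_append_of_le hj]
  · refine Finset.sum_congr rfl fun j _ => ?_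
    rw [pathVertex_append_length_add, add_assoc, pathVertex_append_length_add]

variable (hW : ∀ g h, W h g = -W g h)
include hW

lemma pathSum_of_red_step (x : G) {L₁ L₂ : List (ι × Bool)} (h : FreeGroup.Red.Step L₁ L₂) :
    pathSum φ W x L₁ = pathSum φ W x L₂ := by
  cases h with | @not L L' c b => ?_
  have hcancel : FreeGroup.mk [(c, b), (c, !b)] = 1 :=
    FreeGroup.Red.exact.2 ⟨[], .single (FreeGroup.Red.Step.not (L₁ := []) (L₂ := [])), .refl⟩
  have hpair : ∀ y : G, pathSum φ W y [(c, b), (c, !b)] = 0 := by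
    intro y
    have h₂ : pathVertex φ y [(c, b), (c, !b)] 2 = y := by simp [pathVertex, hcancel]
    simp only [pathSum, List.length_cons, List.length_nil, Finset.sum_range_succ,
      Finset.sum_range_zero, zero_add, pathVertex_zero, h₂]
    rw [hW, neg_add_cancel]
  rw [show L ++ (c, b) :: (c, !b) :: L' = L ++ ([(c, b), (c, !b)] ++ L') from rfl,
    pathSum_append, pathSum_append, hpair, hcancel, map_one, mul_one, zero_add, pathSum_append]

lemma pathSum_of_red (x : G) {L₁ L₂ : List (ι × Bool)} (h : FreeGroup.Red L₁ L₂) :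
    pathSum φ W x L₁ = pathSum φ W x L₂ := by
  induction h with
  | refl => rfl
  | tail _ hstep ih => rw [ih, pathSum_of_red_step hW x hstep]

end PathSum

section ReducedPathSum

variable [DecidableEq ι] (φ : FreeGroup ι →* G) {A : Type*} [AddCommGroup A] (W : G → G → A)

noncomputable def reducedPathSum (x : G) (u : FreeGroup ι) : A :=
  pathSum φ W x u.toWord

variable {φ W}

lemma reducedPathSum_one (x : G) : reducedPathSum φ W x 1 = 0 := by
  simp [reducedPathSum, pathSum]

variable (hW : ∀ g h, W h g = -W g h)
include hW

lemma pathSum_eq_reducedPathSum (x : G) (L : List (ι × Bool)) :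
    pathSum φ W x L = reducedPathSum φ W x (FreeGroup.mk L) := by
  rw [reducedPathSum, FreeGroup.toWord_mk]
  exact pathSum_of_red hW x FreeGroup.reduce.red

lemma reducedPathSum_mul (x : G) (u v : FreeGroup ι) :
    reducedPathSum φ W x (u * v) = reducedPathSum φ W x u + reducedPathSum φ W (x * φ u) v := by
  conv_lhs => rw [← u.mk_toWord, ← v.mk_toWord, FreeGroup.mul_mk,
    ← pathSum_eq_reducedPathSum hW, pathSum_append, FreeGroup.mk_toWord]
  rfl

lemma reducedPathSum_inv (x : G) (u : FreeGroup ι) :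
    reducedPathSum φ W x u⁻¹ = -reducedPathSum φ W (x * (φ u)⁻¹) u := by
  have h := reducedPathSum_mul (φ := φ) hW x u⁻¹ u
  rw [inv_mul_cancel, reducedPathSum_one, map_inv] at h
  exact eq_neg_of_add_eq_zero_left h.symm

lemma reducedPathSum_conj (x : G) (f R : FreeGroup ι) (hR : φ R = 1) :
    reducedPathSum φ W x (f⁻¹ * R * f) = reducedPathSum φ W (x * (φ f)⁻¹) R := by
  rw [reducedPathSum_mul hW, reducedPathSum_mul hW, reducedPathSum_inv hW, map_mul, hR,
    map_inv]
  simp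

end ReducedPathSum

section Area

variable {R : Set (FreeGroup ι)} {u v w : FreeGroup ι} {l l₁ l₂ : ℕ}

namespace AreaLe

lemma one : AreaLe R 1 0 := ⟨[], rfl, by simp, by simp⟩

lemma mul (hu : AreaLe R u l₁) (hv : AreaLe R v l₂) : AreaLe R (u * v) (l₁ + l₂) := by
  obtain ⟨L₁, rfl, h₁, rfl⟩ := hu
  obtain ⟨L₂, rfl, h₂, rfl⟩ := hv
  refine ⟨L₁ ++ L₂, by simp, fun p hp => ?_, by simp⟩
  rcases List.mem_append.mp hp with hp | hp
  exacts [h₁ p hp, h₂ p hp]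

lemma inv (hu : AreaLe R u l) : AreaLe R u⁻¹ l := by
  obtain ⟨L, rfl, hL, rfl⟩ := hu
  refine ⟨(L.map fun p => (p.1, p.2⁻¹)).reverse, by simp, ?_, ?_⟩
  · simp only [List.mem_reverse, List.mem_map]
    rintro _ ⟨p, hp, rfl⟩
    simpa [or_comm] using hL p hp
  · rw [List.prod_inv_reverse, List.map_reverse, List.map_map, List.map_map]
    congr 2
    refine List.map_congr_left fun p _ => ?_
    simp [mul_assoc]

lemma conj_of_mem {r : FreeGroup ι} (hr : r ∈ R) (c : FreeGroup ι) : AreaLe R (c * r * c⁻¹) 1 :=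
  ⟨[(c⁻¹, r)], rfl, by simp [hr], by simp⟩

end AreaLe

lemma exists_areaLe_of_mem_normalClosure (hw : w ∈ Subgroup.normalClosure R) :
    ∃ l, AreaLe R w l := by
  induction hw using Subgroup.closure_induction with
  | mem u hu =>
    obtain ⟨r, hr, hconj⟩ := Group.mem_conjugatesOfSet_iff.mp hu
    obtain ⟨c, rfl⟩ := isConj_iff.mp hconj
    exact ⟨1, .conj_of_mem hr c⟩
  | one => exact ⟨0, .one⟩
  | mul _ _ _ _ hu hv =>
    obtain ⟨l₁, hu⟩ := hu
    obtain ⟨l₂, hv⟩ := hv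
    exact ⟨_, hu.mul hv⟩
  | inv _ _ hu =>
    obtain ⟨l, hu⟩ := hu
    exact ⟨l, hu.inv⟩

lemma areaLe_area (hw : w ∈ Subgroup.normalClosure R) : AreaLe R w (area R w) :=
  Nat.sInf_mem (exists_areaLe_of_mem_normalClosure hw)

variable {φ : FreeGroup ι →* G}

lemma triv_mono {k m : ℕ} (hkm : k ≤ m) : triv φ k ⊆ triv φ m :=
  fun _ hu => ⟨hu.1.trans hkm, hu.2⟩

variable [Finite ι]

lemma area_le_isoSpec {k m n : ℕ} (hw : w ∈ Subgroup.normalClosure (triv φ k))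
    (hn : wnorm w ≤ n) : area (triv φ m) w ≤ isoSpec φ k m n := by
  classical
  have hfin : {u | u ∈ Subgroup.normalClosure (triv φ k) ∧ wnorm u ≤ n}.Finite := by
    refine ((List.finite_length_le (ι × Bool) n).image FreeGroup.mk).subset fun u hu => ?_
    exact ⟨u.toWord, (wnorm_eq_length_toWord u).symm.trans_le hu.2, u.mk_toWord⟩
  exact le_csSup (hfin.image _).bddAbove ⟨w, ⟨hw, hn⟩, rfl⟩

lemma exists_areaLe_of_specLE_linSpec (h : SpecLE (isoSpecR φ) linSpec) :
    ∃ C : ℕ, 0 < C ∧ ∀ (k n : ℕ) (w : FreeGroup ι), 0 < k → 0 < n →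
      w ∈ Subgroup.normalClosure (triv φ k) → wnorm w ≤ n →
      ∃ ℓ : ℕ, AreaLe (triv φ (C * (C * k))) w ℓ ∧ (ℓ : ℝ) ≤ (C + 1) * n / k + C := by
  obtain ⟨C, hC, hspec⟩ := h
  refine ⟨C, hC, fun k n w hk hn hw hwn => ⟨_, areaLe_area ?_, ?_⟩⟩
  · refine Subgroup.normalClosure_mono (triv_mono ?_) hw
    exact Nat.le_mul_of_pos_left _ hC |>.trans (Nat.le_mul_of_pos_left _ hC)
  · calc (area (triv φ (C * (C * k))) w : ℝ) ≤ isoSpecR φ k (C * (C * k)) n :=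
          Nat.cast_le.mpr (area_le_isoSpec hw hwn)
      _ ≤ C * linSpec (C * k) (C * k) (C * n) + C * n / (C * k : ℕ) + C :=
          hspec k (C * k) n hk (by positivity) hn le_rfl
      _ = (C + 1) * n / k + C := by
          simp only [linSpec, Nat.cast_mul]
          field_simp

end Area

section Levels

open Finset

variable (φ : FreeGroup ι →* G)

noncomputable def levelIndicator (o : G) (s : ℕ) (v : G) : ℤ :=
  if s < wdist φ o v then 1 else 0

noncomputable def levelWeight (o a : G) (s : ℕ) (g h : G) : ℤ :=
  (levelIndicator φ o s h - levelIndicator φ o s g) *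
    wdist φ a (if wdist φ o g ≤ wdist φ o h then g else h)

variable {φ}

lemma levelWeight_antisymm (o a : G) (s : ℕ) (g h : G) :
    levelWeight φ o a s h g = -levelWeight φ o a s g h := by
  unfold levelWeight levelIndicator
  rcases lt_trichotomy (wdist φ o g) (wdist φ o h) with hlt | heq | hgt
  · simp only [hlt.le, not_le.mpr hlt, if_true, if_false]; ring
  · simp [heq]
  · simp only [hgt.le, not_le.mpr hgt, if_true, if_false]; ring

lemma pathSum_levelWeight_eq_zero (o a : G) {s : ℕ} {x : G} {L : List (ι × Bool)}
    (hfar : ∀ j ≤ L.length, s < wdist φ o (pathVertex φ x L j)) :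
    pathSum φ (levelWeight φ o a s) x L = 0 := by
  refine sum_eq_zero fun j hj => ?_
  have hj := mem_range.mp hj
  simp [levelWeight, levelIndicator, hfar j hj.le, hfar (j + 1) hj]

variable (hφ : Surjective φ)
include hφ

lemma sum_abs_levelIndicator_sub_le_one (o : G) {g h : G} (hgh : wdist φ g h ≤ 1) (T : ℕ) :
    ∑ s ∈ range T, |levelIndicator φ o s h - levelIndicator φ o s g| ≤ 1 := by
  have h₁ := wdist_triangle hφ o g h
  have h₂ := wdist_triangle hφ o h g
  rw [wdist_comm hφ h g] at h₂
  calc ∑ s ∈ range T, |levelIndicator φ o s h - levelIndicator φ o s g|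
      ≤ ∑ s ∈ range T, if min (wdist φ o g) (wdist φ o h) = s then 1 else 0 := by
        gcongr with s
        unfold levelIndicator
        split_ifs <;> simp <;> omega
    _ ≤ 1 := by
        rw [sum_ite_eq]
        split_ifs <;> norm_num

lemma levelWeight_sub_le (o a y : G) (s : ℕ) (g h : G) :
    levelWeight φ o a s g h - (levelIndicator φ o s h - levelIndicator φ o s g) * wdist φ a y ≤
      |levelIndicator φ o s h - levelIndicator φ o s g| * max (wdist φ y g) (wdist φ y h) := by
  rw [levelWeight, ← mul_sub]
  refine (le_abs_self _).trans ?_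
  rw [abs_mul]
  gcongr
  have hz : ∀ z, |(wdist φ a z : ℤ) - wdist φ a y| ≤ wdist φ y z := fun z =>
    wdist_comm hφ y z ▸ abs_wdist_sub_wdist_le hφ a z y
  split_ifs
  · exact (hz g).trans (by exact_mod_cast le_max_left _ _)
  · exact (hz h).trans (by exact_mod_cast le_max_right _ _)

lemma sum_pathSum_levelWeight_le_sq (o : G) (a : ℕ → G) (T : ℕ) (y : G)
    {L : List (ι × Bool)} (hL : φ (FreeGroup.mk L) = 1) :
    ∑ s ∈ range T, pathSum φ (levelWeight φ o (a s) s) y L ≤ L.length ^ 2 := by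
  set N := L.length
  set v := pathVertex φ y L
  set Δ : ℕ → ℕ → ℤ := fun s j => levelIndicator φ o s (v (j + 1)) - levelIndicator φ o s (v j)
  have hclosed : ∀ s, ∑ j ∈ range N, Δ s j = 0 := fun s => by
    rw [sum_range_sub (fun j => levelIndicator φ o s (v j))]
    simp [v, N, hL]
  have hv : ∀ j ≤ N, wdist φ y (v j) ≤ N := fun j hj => by
    simpa [v] using (wdist_pathVertex_le (φ := φ) (x := y) (L := L) (Nat.zero_le j)).trans hj
  -- On a closed path the differences `Δ s j` telescope to `0`, so subtracting the constant
  -- `wdist (a s) y` from every weight changes nothing; afterwards each weight is at most `N`.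
  calc ∑ s ∈ range T, pathSum φ (levelWeight φ o (a s) s) y L
      = ∑ s ∈ range T, ∑ j ∈ range N,
          (levelWeight φ o (a s) s (v j) (v (j + 1)) - Δ s j * wdist φ (a s) y) := by
        refine sum_congr rfl fun s _ => ?_
        rw [sum_sub_distrib, ← sum_mul, hclosed, zero_mul, sub_zero]
        rfl
    _ ≤ ∑ s ∈ range T, ∑ j ∈ range N, |Δ s j| * N := by
        gcongr with s _ j hj
        refine (levelWeight_sub_le hφ o (a s) y s _ _).trans ?_
        have hj := mem_range.mp hj
        gcongr
        exact_mod_cast max_le (hv j hj.le) (hv (j + 1) hj)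
    _ = ∑ j ∈ range N, (∑ s ∈ range T, |Δ s j|) * N := by
        rw [sum_comm]
        simp_rw [sum_mul]
    _ ≤ ∑ _j ∈ range N, 1 * (N : ℤ) := by
        gcongr with j
        refine sum_abs_levelIndicator_sub_le_one hφ o ?_ T
        simpa using wdist_pathVertex_le (φ := φ) (x := y) (L := L) (Nat.le_succ j)
    _ = N ^ 2 := by simp [sq]

end Levels

lemma sum_range_two_mul (T : ℕ) : ∑ s ∈ Finset.range T, (2 * s : ℤ) = T * (T - 1) := by
  induction T with
  | zero => simp
  | succ T ih => rw [Finset.sum_range_succ, ih]; push_cast; ring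

section Detour

open Finset

variable {φ : FreeGroup ι →* G} (hφ : Surjective φ)
include hφ

lemma sum_reducedPathSum_levelWeight_le [DecidableEq ι] (o : G) (a : ℕ → G) (T : ℕ)
    {M ℓ : ℕ} {w : FreeGroup ι} (hw : AreaLe (triv φ M) w ℓ) (x : G) :
    ∑ s ∈ range T, reducedPathSum φ (levelWeight φ o (a s) s) x w ≤ ℓ * M ^ 2 := by
  obtain ⟨L, rfl, hL, rfl⟩ := hw
  induction L generalizing x with
  | nil => simp [reducedPathSum_one]
  | cons p L ih =>
    have hp : wnorm p.2 ≤ M ∧ φ p.2 = 1 := by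
      rcases hL p List.mem_cons_self with h | h
      · exact h
      · simpa [triv, wnorm_inv] using h
    have hrel : ∑ s ∈ range T, reducedPathSum φ (levelWeight φ o (a s) s) x (p.1⁻¹ * p.2 * p.1)
        ≤ M ^ 2 := by
      simp_rw [reducedPathSum_conj (levelWeight_antisymm o _ _) x p.1 p.2 hp.2, reducedPathSum]
      refine (sum_pathSum_levelWeight_le_sq hφ o a T _ (by rw [FreeGroup.mk_toWord, hp.2])).trans ?_
      rw [← wnorm_eq_length_toWord]
      exact_mod_cast Nat.pow_le_pow_left hp.1 2
    have hconj : φ (p.1⁻¹ * p.2 * p.1) = 1 := by simp [hp.2]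
    simp only [List.map_cons, List.prod_cons, List.length_cons,
      reducedPathSum_mul (levelWeight_antisymm o _ _) x (p.1⁻¹ * p.2 * p.1), hconj, mul_one,
      sum_add_distrib]
    push_cast
    linarith [ih x (fun q hq => hL q (List.mem_cons_of_mem _ hq))]

lemma pathSum_levelWeight_geodesic {x : G} {L : List (ι × Bool)}
    (hgeo : wlen φ (φ (FreeGroup.mk L)) = L.length) {j₀ s : ℕ} (hs : s < j₀)
    (hs' : j₀ + s < L.length) :
    pathSum φ (levelWeight φ (pathVertex φ x L j₀) (pathVertex φ x L (j₀ - s)) s) x L = 2 * s := by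
  have hd := fun i j => wdist_pathVertex_of_geodesic (x := x) (i := i) (j := j) hφ hgeo
  have hterm : ∀ j ∈ range L.length,
      levelWeight φ (pathVertex φ x L j₀) (pathVertex φ x L (j₀ - s)) s
        (pathVertex φ x L j) (pathVertex φ x L (j + 1)) =
          if j₀ + s = j then (2 * s : ℤ) else 0 := by
    intro j hj
    have hj := mem_range.mp hj
    simp only [levelWeight, levelIndicator, apply_ite (wdist φ (pathVertex φ x L (j₀ - s)))]
    rw [hd j₀ j (by omega) (by omega), hd j₀ (j + 1) (by omega) (by omega),
      hd (j₀ - s) j (by omega) (by omega), hd (j₀ - s) (j + 1) (by omega) (by omega)]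
    split_ifs <;> push_cast <;> omega
  rw [pathSum, sum_congr rfl hterm, sum_ite_eq, if_pos (mem_range.mpr hs')]

lemma sum_reducedPathSum_levelWeight_detour [DecidableEq ι] {x : G} {Lp Lq : List (ι × Bool)}
    (hgeo : wlen φ (φ (FreeGroup.mk Lp)) = Lp.length) {j₀ T : ℕ} (hj₀ : j₀ ≤ Lp.length)
    (hq : φ (FreeGroup.mk Lq) = φ (FreeGroup.mk Lp))
    (hfar : ∀ g ∈ pathVerts φ x Lq, T ≤ wdist φ (pathVertex φ x Lp j₀) g) :
    ∑ s ∈ range T, reducedPathSum φ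
        (levelWeight φ (pathVertex φ x Lp j₀) (pathVertex φ x Lp (j₀ - s)) s) x
        (FreeGroup.mk Lp * (FreeGroup.mk Lq)⁻¹) = T * (T - 1 : ℤ) := by
  have hd := fun i j => wdist_pathVertex_of_geodesic (x := x) (i := i) (j := j) hφ hgeo
  -- The endpoints of `q` are those of `p`, at distances `j₀` and `|p| - j₀` from `o`, so `p`
  -- crosses every level `s < T` on both sides of `o`.
  have hstart := hfar _ (pathVertex_mem_pathVerts (Nat.zero_le Lq.length))
  have hend := hfar _ (pathVertex_mem_pathVerts le_rfl)
  have h₀ := hd j₀ 0 hj₀ (Nat.zero_le _)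
  rw [pathVertex_zero] at h₀ hstart
  rw [h₀] at hstart
  rw [pathVertex_length, hq, ← pathVertex_length, hd _ _ hj₀ le_rfl] at hend
  have hlevel : ∀ s ∈ range T, reducedPathSum φ
      (levelWeight φ (pathVertex φ x Lp j₀) (pathVertex φ x Lp (j₀ - s)) s) x
      (FreeGroup.mk Lp * (FreeGroup.mk Lq)⁻¹) = 2 * s := by
    intro s hs
    have hs := mem_range.mp hs
    have hW := levelWeight_antisymm (φ := φ) (pathVertex φ x Lp j₀) (pathVertex φ x Lp (j₀ - s)) s
    rw [reducedPathSum_mul hW, reducedPathSum_inv hW, hq, mul_inv_cancel_right,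
      ← pathSum_eq_reducedPathSum hW, ← pathSum_eq_reducedPathSum hW,
      pathSum_levelWeight_geodesic hφ hgeo (by omega) (by omega),
      pathSum_levelWeight_eq_zero _ _ fun j hj => ?_, neg_zero, add_zero]
    exact hs.trans_le (hfar _ (pathVertex_mem_pathVerts hj))
  rw [sum_congr rfl hlevel, sum_range_two_mul]

end Detour

lemma div_sq_le_of_floor_mul_le {c k r ℓ m : ℝ} {n : ℕ} (hc : 1 ≤ c) (hk : 1 ≤ k) (hr : 0 ≤ r)
    (hrn : r < n) (hsq : (⌊r⌋₊ : ℝ) * (⌊r⌋₊ - 1) ≤ ℓ * (c * (c * k)) ^ 2)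
    (hℓ : ℓ ≤ (c + 1) * m / k + c) (hm : m ≤ 2 * n) :
    1 / (8 * c ^ 5) * (r / k) ^ 2 ≤ n := by
  have hT₁ : (⌊r⌋₊ : ℝ) ≤ r := Nat.floor_le hr
  have hT₂ : r - 1 < ⌊r⌋₊ := Nat.sub_one_lt_floor r
  have hn : (1 : ℝ) ≤ n := Nat.one_le_cast.mpr (Nat.cast_pos.mp (hr.trans_lt hrn))
  have hk0 : 0 < k := by linarith
  have hc4 : 1 ≤ c ^ 4 := one_le_pow₀ hc
  have hfloor : r ^ 2 - 3 * r ≤ ⌊r⌋₊ * (⌊r⌋₊ - 1 : ℝ) := by nlinarith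
  have hℓ' : ℓ ≤ (c + 1) * (2 * n) / k + c := hℓ.trans (by gcongr)
  have harea : ℓ * (c * (c * k)) ^ 2 ≤ 2 * (c + 1) * c ^ 4 * n * k + c * c ^ 4 * k ^ 2 := by
    calc ℓ * (c * (c * k)) ^ 2 ≤ ((c + 1) * (2 * n) / k + c) * (c * (c * k)) ^ 2 := by gcongr
      _ = _ := by field_simp
  have hsum : r ^ 2 ≤ 8 * c * c ^ 4 * n * k ^ 2 := by
    have h₁ : 3 * r ≤ 3 * c * c ^ 4 * n * k ^ 2 := by
      have : 1 ≤ c * c ^ 4 * k ^ 2 := by nlinarith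
      nlinarith
    have h₂ : 2 * (c + 1) * c ^ 4 * n * k ≤ 4 * c * c ^ 4 * n * k ^ 2 := by
      have : (c + 1) * k ≤ 2 * c * k ^ 2 := by
        nlinarith [mul_nonneg (sub_nonneg.2 hc) hk0.le,
          mul_nonneg (mul_nonneg (by linarith : (0 : ℝ) ≤ c) hk0.le) (sub_nonneg.2 hk)]
      have : 0 ≤ c ^ 4 * n := by positivity
      nlinarith
    have h₃ : c * c ^ 4 * k ^ 2 ≤ c * c ^ 4 * n * k ^ 2 := by
      have : 0 ≤ c * c ^ 4 * k ^ 2 := by positivity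
      nlinarith
    linarith
  rw [div_pow, one_div_mul_eq_div, div_le_iff₀ (by positivity), div_le_iff₀ (by positivity)]
  nlinarith

/-- In a group with linear isoperimetric spectrum, if `q` is an
`r`-detour of a vertex `o` of a geodesic `p` and the loop `p q⁻¹` is labelled by a word
in `⟪S_k⟫`, then `ℓ(q) ≥ D (r/k)²`. -/
theorem detour_of_linear_isoSpec {G : Type} [Group G] {a : ℕ}
    (φ : FreeGroup (Fin a) →* G) (hφ : Surjective φ)
    (hlin : SpecEquiv (isoSpecR φ) linSpec) :
    ∃ D : ℝ, 0 < D ∧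
      ∀ (x : G) (Lp Lq : List (Fin a × Bool)) (o : G) (r : ℝ) (k : ℕ),
        0 < k → 0 ≤ r →
        -- `p` is geodesic: its length realizes the distance between its endpoints
        wlen φ (φ (FreeGroup.mk Lp)) = Lp.length →
        -- `o` is a vertex of `p`
        o ∈ pathVerts φ x Lp →
        -- `q` has the same endpoints as `p`
        φ (FreeGroup.mk Lq) = φ (FreeGroup.mk Lp) →
        -- `q` avoids the closed `r`-neighborhood of `o`
        (∀ g ∈ pathVerts φ x Lq, r < (wdist φ o g : ℝ)) →
        -- the label of the loop `p q⁻¹` lies in `⟪S_k⟫`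
        FreeGroup.mk Lp * (FreeGroup.mk Lq)⁻¹ ∈ Subgroup.normalClosure (triv φ k) →
        D * (r / (k : ℝ)) ^ 2 ≤ (Lq.length : ℝ) := by
  obtain ⟨C, hC, hfill⟩ := exists_areaLe_of_specLE_linSpec hlin.1
  refine ⟨1 / (8 * C ^ 5), by positivity, ?_⟩
  intro x Lp Lq o r k hk hr hgeo ho hq hdet hw
  obtain ⟨j₀, hj₀, rfl⟩ := ho
  have hlen := length_le_length_of_geodesic hgeo hq
  have hrn : r < Lq.length := by
    have hstart := hdet x
      (by simpa using pathVertex_mem_pathVerts (φ := φ) (x := x) (Nat.zero_le Lq.length))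
    have : wdist φ (pathVertex φ x Lp j₀) x ≤ j₀ := by
      simpa [wdist_comm hφ x] using
        wdist_pathVertex_le (φ := φ) (x := x) (L := Lp) (Nat.zero_le j₀)
    exact hstart.trans_le (by exact_mod_cast this.trans (hj₀.trans hlen))
  obtain ⟨ℓ, hℓ, hℓle⟩ := hfill k (Lp.length + Lq.length) _ hk
    (by have := Nat.cast_pos.mp (hr.trans_lt hrn); omega) hw
    ((wnorm_mul_le _ _).trans (by rw [wnorm_inv]; exact add_le_add (wnorm_mk_le _) (wnorm_mk_le _)))
  have hsq := (sum_reducedPathSum_levelWeight_detour hφ hgeo hj₀ hq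
      fun g hg => Nat.floor_le_of_le (hdet g hg).le).symm.trans_le
    (sum_reducedPathSum_levelWeight_le hφ _ _ _ hℓ x)
  exact div_sq_le_of_floor_mul_le (by exact_mod_cast hC) (by exact_mod_cast hk) hr hrn
    (by exact_mod_cast hsq) hℓle
    (by exact_mod_cast (by omega : Lp.length + Lq.length ≤ 2 * Lq.length))

end IsoSpecPaper
end

section
/- Let Q be an F_σ quasi-order on a Polish space X, i.e., a reflexive and transitive relation that, as a subset of X × X, is a countable union of closed sets, and let E_Q be the induced equivalence relation: x E_Q y iff x Q y and y Q x. Suppose E_Q is generically ergodic (every E_Q-invariant Borel subset of X is meager or comeager) and that X contains an E_Q-equivalence class that is dense in X and whose complement is also dense in X. Then E_Q is a meager subset of X × X, and X contains a Q-antichain of cardinality 2^{ℵ₀}, i.e., a set of continuum cardinality whose distinct elements are pairwise Q-incomparable. -/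
/-!
The class `[x]` is `F_σ` with dense complement, hence meagre. If `Q` were not meagre, then,
being `F_σ`, it would contain an open rectangle `U × V`. Density of `[x]` and transitivity put
`U` below `x` and `V` above `x`, so the Borel `E_Q`-invariant sets `{y | Q y x}` and
`{y | Q x y}` are not meagre, hence comeagre by generic ergodicity; then so is their
intersection `[x]`, which is impossible in a Baire space. Thus `Q`, and with it `E_Q`, is meagre.

The antichain comes from Mycielski's theorem for the meagre set `Q ⊆ X × X`: its complement
contains a decreasing intersection of dense open sets `G n`, and a Cantor scheme of open sets of
radius `2⁻ⁿ`, whose closures at distinct nodes of level `n` span rectangles inside `G n`, sends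
distinct branches to `Q`-unrelated points.
-/

open Function Set Filter Topology Metric

theorem exists_antitone_isOpen_dense_iInter_subset_of_mem_residual {Y : Type*}
    [TopologicalSpace Y] {s : Set Y} (hs : s ∈ residual Y) :
    ∃ G : ℕ → Set Y, (∀ n, IsOpen (G n)) ∧ (∀ n, Dense (G n)) ∧ Antitone G ∧ ⋂ n, G n ⊆ s := by
  obtain ⟨S, hSo, hSd, hSc, hSs⟩ := mem_residual_iff.1 hs
  obtain ⟨g, hg⟩ := (hSc.insert univ).exists_eq_range (insert_nonempty _ _)
  have hgod : ∀ k, IsOpen (g k) ∧ Dense (g k) := fun k => by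
    rcases (hg ▸ mem_range_self k : g k ∈ insert univ S) with h | h
    exacts [h ▸ ⟨isOpen_univ, dense_univ⟩, ⟨hSo _ h, hSd _ h⟩]
  refine ⟨fun n => ⋂₀ (g '' Iic n),
    fun n => ((finite_Iic n).image g).isOpen_sInter (forall_mem_image.2 fun k _ => (hgod k).1),
    fun n => ((finite_Iic n).image g).dense_sInter (forall_mem_image.2 fun k _ => (hgod k).1)
      (forall_mem_image.2 fun k _ => (hgod k).2),
    fun m n h => sInter_subset_sInter (image_mono (Iic_subset_Iic.2 h)), fun x hx => hSs ?_⟩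
  intro t ht
  obtain ⟨k, rfl⟩ : t ∈ range g := hg ▸ mem_insert_of_mem _ ht
  exact mem_iInter.1 hx k _ (mem_image_of_mem g self_mem_Iic)

section ShrinkFamily

variable {ι X : Type*} [TopologicalSpace X]

theorem dense_setOf_apply_prodMk_mem {D : Set (X × X)} (hD : Dense D) {i j : ι} (hij : i ≠ j) :
    Dense {x : ι → X | (x i, x j) ∈ D} := by
  classical
  let φ : (X × X) × (ι → X) → ι → X := fun q => update (update q.2 i q.1.1) j q.1.2
  have hφ : DenseRange φ := Surjective.denseRange fun x => ⟨((x i, x j), x), by simp [φ]⟩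
  refine (hφ.dense_image (by fun_prop) (hD.prod dense_univ)).mono ?_
  rintro _ ⟨⟨⟨a, b⟩, y⟩, ⟨hab, -⟩, rfl⟩
  simpa [φ, update_of_ne hij] using hab

theorem exists_open_subfamily_pairwise_prod_subset [Finite ι] {D : Set (X × X)} (hDo : IsOpen D)
    (hDd : Dense D) {U : ι → Set X} (hUo : ∀ i, IsOpen (U i)) (hUne : ∀ i, (U i).Nonempty) :
    ∃ V : ι → Set X, (∀ i, IsOpen (V i) ∧ (V i).Nonempty ∧ V i ⊆ U i) ∧
      Pairwise fun i j => V i ×ˢ V j ⊆ D := by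
  classical
  -- All pair constraints together cut out a dense open set in `ι → X`; a box inside it gives `V`.
  let P : {p : ι × ι // p.1 ≠ p.2} → Set (ι → X) := fun p => {x | (x p.1.1, x p.1.2) ∈ D}
  have hPo : ∀ p, IsOpen (P p) := fun p => hDo.preimage (by fun_prop)
  have hPd : Dense (⋂ p, P p) := by
    simpa only [sInter_range] using (finite_range P).dense_sInter (forall_mem_range.2 hPo)
      (forall_mem_range.2 fun p => dense_setOf_apply_prodMk_mem hDd p.2)
  have hUpi : IsOpen (univ.pi U) := isOpen_set_pi finite_univ fun i _ => hUo i
  obtain ⟨x, hx⟩ := hPd.inter_open_nonempty _ hUpi (univ_pi_nonempty_iff.2 hUne)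
  obtain ⟨u, hu, hux⟩ := isOpen_pi_iff'.1 (hUpi.inter (isOpen_iInter_of_finite hPo)) x hx
  have hxu : x ∈ univ.pi u := fun i _ => (hu i).2
  refine ⟨u, fun i => ⟨(hu i).1, ⟨x i, (hu i).2⟩, fun a ha => ?_⟩, fun i j hij => ?_⟩
  · simpa using (hux ((update_mem_pi_iff_of_mem hxu).2 fun _ => ha)).1 i (mem_univ i)
  · rintro ⟨a, b⟩ ⟨ha, hb⟩
    have hy := (update_mem_pi_iff_of_mem ((update_mem_pi_iff_of_mem hxu).2 fun _ => ha)).2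
      fun _ => hb
    simpa [P, update_of_ne hij] using mem_iInter.1 (hux hy).2 ⟨(i, j), hij⟩

end ShrinkFamily

section Mycielski

variable {ι X : Type*} [PseudoMetricSpace X]

theorem exists_small_open_subfamily_pairwise_closure_prod_subset [Finite ι] {D : Set (X × X)}
    (hDo : IsOpen D) (hDd : Dense D) {U : ι → Set X} (hUo : ∀ i, IsOpen (U i))
    (hUne : ∀ i, (U i).Nonempty) {ε : ℝ} (hε : 0 < ε) :
    ∃ W : ι → Set X, (∀ i, IsOpen (W i) ∧ (W i).Nonempty ∧ (∃ c, W i ⊆ ball c ε) ∧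
      closure (W i) ⊆ U i) ∧ Pairwise fun i j => closure (W i) ×ˢ closure (W j) ⊆ D := by
  obtain ⟨V, hV, hVD⟩ := exists_open_subfamily_pairwise_prod_subset hDo hDd hUo hUne
  have hball : ∀ i, ∃ c r, 0 < r ∧ r ≤ ε ∧ closedBall c r ⊆ V i := fun i => by
    obtain ⟨c, hc⟩ := (hV i).2.1
    obtain ⟨r, hr, hrV⟩ := nhds_basis_closedBall.mem_iff.1 ((hV i).1.mem_nhds hc)
    exact ⟨c, min r ε, lt_min hr hε, min_le_right _ _,
      (closedBall_subset_closedBall (min_le_left _ _)).trans hrV⟩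
  choose c r hr hrε hrV using hball
  have hclosure : ∀ i, closure (ball (c i) (r i)) ⊆ V i := fun i =>
    closure_ball_subset_closedBall.trans (hrV i)
  refine ⟨fun i => ball (c i) (r i), fun i => ⟨isOpen_ball, ⟨c i, mem_ball_self (hr i)⟩,
    ⟨c i, ball_subset_ball (hrε i)⟩, (hclosure i).trans (hV i).2.2⟩, fun i j hij => ?_⟩
  exact (prod_mono (hclosure i) (hclosure j)).trans (hVD hij)

structure IsMycielskiLevel (G : ℕ → Set (X × X)) (n : ℕ) (V : (Fin n → Bool) → Set X) : Prop where
  isOpen : ∀ s, IsOpen (V s)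
  nonempty : ∀ s, (V s).Nonempty
  subset_ball : ∀ s, ∃ c, V s ⊆ ball c ((1 / 2) ^ n)
  closure_prod_closure_subset : Pairwise fun s t => closure (V s) ×ˢ closure (V t) ⊆ G n

theorem exists_mycielskiLevel_seq [Nonempty X] {G : ℕ → Set (X × X)} (hGo : ∀ n, IsOpen (G n))
    (hGd : ∀ n, Dense (G n)) :
    ∃ V : (n : ℕ) → (Fin n → Bool) → Set X, (∀ n, IsMycielskiLevel G n (V n)) ∧
      ∀ n s, closure (V (n + 1) s) ⊆ V n (Fin.init s) := by
  have hstep : ∀ n (V : (Fin n → Bool) → Set X), IsMycielskiLevel G n V →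
      ∃ W, IsMycielskiLevel G (n + 1) W ∧ ∀ s, closure (W s) ⊆ V (Fin.init s) := by
    intro n V hV
    obtain ⟨W, hW, hWG⟩ := exists_small_open_subfamily_pairwise_closure_prod_subset (hGo (n + 1))
      (hGd (n + 1)) (U := fun s : Fin (n + 1) → Bool => V (Fin.init s)) (fun s => hV.isOpen _)
      (fun s => hV.nonempty _) (ε := (1 / 2) ^ (n + 1)) (by positivity)
    exact ⟨W, ⟨fun s => (hW s).1, fun s => (hW s).2.1, fun s => (hW s).2.2.1, hWG⟩,
      fun s => (hW s).2.2.2⟩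
  choose! next hnext using hstep
  obtain ⟨x₀⟩ := ‹Nonempty X›
  let V : (n : ℕ) → (Fin n → Bool) → Set X := fun n => Nat.rec (fun _ => ball x₀ 1) next n
  have hV : ∀ n, IsMycielskiLevel G n (V n) := by
    intro n
    induction n with
    | zero => exact ⟨fun _ => isOpen_ball, fun _ => ⟨x₀, mem_ball_self one_pos⟩,
        fun _ => ⟨x₀, by rw [pow_zero]; exact subset_rfl⟩,
        fun s t hst => (hst (Subsingleton.elim s t)).elim⟩
    | succ n ih => exact (hnext n _ ih).1
  exact ⟨V, hV, fun n => (hnext n _ (hV n)).2⟩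

theorem exists_forall_mem_closure_of_mycielskiLevel [CompleteSpace X] {G : ℕ → Set (X × X)}
    {V : (n : ℕ) → (Fin n → Bool) → Set X} (hV : ∀ n, IsMycielskiLevel G n (V n))
    (hVV : ∀ n s, closure (V (n + 1) s) ⊆ V n (Fin.init s)) (α : ℕ → Bool) :
    ∃ y, ∀ n, y ∈ closure (V n fun i => α i) := by
  set K : ℕ → Set X := fun n => closure (V n fun i => α i)
  have hK : Antitone K := antitone_nat_of_succ_le fun n => (hVV n _).trans subset_closure
  choose c hc using fun n => (hV n).subset_ball fun i => α i
  have hdiam : ∀ n, diam (K n) ≤ 2 * (1 / 2) ^ n := fun n => by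
    rw [diam_closure]
    exact (diam_mono (hc n) isBounded_ball).trans (diam_ball (by positivity))
  have hlim : Tendsto (fun n => 2 * (1 / 2 : ℝ) ^ n) atTop (𝓝 0) := by
    simpa using (tendsto_pow_atTop_nhds_zero_of_lt_one (r := (1 / 2 : ℝ)) (by norm_num)
      (by norm_num)).const_mul 2
  obtain ⟨y, hy⟩ := nonempty_iInter_of_nonempty_biInter (s := K) (fun n => isClosed_closure)
    (fun n => (isBounded_ball.subset (hc n)).closure)
    (fun N => ((hV N).nonempty _).mono (subset_closure.trans (subset_iInter₂ fun n hn => hK hn)))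
    (squeeze_zero (fun n => diam_nonneg) hdiam hlim)
  exact ⟨y, mem_iInter.1 hy⟩

end Mycielski

theorem IsMeagre.exists_nat_bool_pairwise_notMem {X : Type*} [TopologicalSpace X] [PolishSpace X]
    [Nonempty X] {R : Set (X × X)} (hR : IsMeagre R) :
    ∃ f : (ℕ → Bool) → X, Pairwise fun α β => (f α, f β) ∉ R := by
  let := TopologicalSpace.upgradeIsCompletelyMetrizable X
  obtain ⟨G, hGo, hGd, hG, hGR⟩ := exists_antitone_isOpen_dense_iInter_subset_of_mem_residual hR
  obtain ⟨V, hV, hVV⟩ := exists_mycielskiLevel_seq hGo hGd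
  choose f hf using exists_forall_mem_closure_of_mycielskiLevel hV hVV
  refine ⟨f, fun α β hαβ hmem => hGR (mem_iInter.2 fun m => ?_) hmem⟩
  obtain ⟨k, hk⟩ := Function.ne_iff.1 hαβ
  have hres : (fun i : Fin (max m (k + 1)) => α i) ≠ fun i : Fin (max m (k + 1)) => β i :=
    fun h => hk (congrFun h ⟨k, by omega⟩)
  exact hG (le_max_left _ _) ((hV _).closure_prod_closure_subset hres ⟨hf α _, hf β _⟩)

section GenericErgodicity

open MeasureTheory

variable {X : Type*} [TopologicalSpace X]

def IsGenericallyErgodic (E : X → X → Prop) : Prop :=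
  ∀ A : Set X, MeasurableSet[borel X] A → (∀ x y, E x y → (x ∈ A ↔ y ∈ A)) →
    IsMeagre A ∨ A ∈ residual X

theorem IsGenericallyErgodic.mem_residual_of_subset [BaireSpace X] {E : X → X → Prop}
    (hE : IsGenericallyErgodic E) {A U : Set X} (hA : MeasurableSet[borel X] A)
    (hAE : ∀ x y, E x y → (x ∈ A ↔ y ∈ A)) (hU : IsOpen U) (hUne : U.Nonempty) (hUA : U ⊆ A) :
    A ∈ residual X :=
  (hE A hA hAE).resolve_left fun hmeagre => not_isMeagre_of_isOpen hU hUne (hmeagre.mono hUA)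

theorem isMeagre_setOf_of_isGenericallyErgodic [BaireSpace X] {Q : X → X → Prop}
    (htrans : ∀ x y z, Q x y → Q y z → Q x z) (hQ : IsGδ {p : X × X | Q p.1 p.2}ᶜ)
    (hE : IsGenericallyErgodic fun x y => Q x y ∧ Q y x) {x : X}
    (hdense : Dense {y | Q x y ∧ Q y x}) (hcodense : Dense {y | ¬(Q x y ∧ Q y x)}) :
    IsMeagre {p : X × X | Q p.1 p.2} := by
  let _ : MeasurableSpace X := borel X
  have _ : BorelSpace X := ⟨rfl⟩
  have _ : Nonempty X := ⟨x⟩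
  have hup : IsGδ {y | Q x y}ᶜ := hQ.preimage (Continuous.prodMk_right x)
  have hdown : IsGδ {y | Q y x}ᶜ := hQ.preimage (Continuous.prodMk_left x)
  have hclass : IsMeagre {y | Q x y ∧ Q y x} := by
    refine residual_of_dense_Gδ ?_ hcodense
    simpa only [ofPred_and, compl_inter] using hup.union hdown
  by_contra hR
  obtain ⟨⟨a, b⟩, hab⟩ : (interior {p : X × X | Q p.1 p.2}).Nonempty :=
    nonempty_iff_ne_empty.2 fun h =>
      hR (residual_of_dense_Gδ hQ (interior_eq_empty_iff_dense_compl.1 h))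
  obtain ⟨U, V, hU, hV, haU, hbV, hUV⟩ := isOpen_prod_iff.1 isOpen_interior a b hab
  have hUVQ : ∀ u ∈ U, ∀ v ∈ V, Q u v := fun u hu v hv =>
    (interior_subset (hUV (mk_mem_prod hu hv)) : (u, v) ∈ {p : X × X | Q p.1 p.2})
  obtain ⟨u, huU, hu⟩ := hdense.inter_open_nonempty U hU ⟨a, haU⟩
  obtain ⟨v, hvV, hv⟩ := hdense.inter_open_nonempty V hV ⟨b, hbV⟩
  have hdown_res : {y | Q y x} ∈ residual X :=
    hE.mem_residual_of_subset hdown.measurableSet.of_compl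
      (fun y z hyz => ⟨htrans _ _ _ hyz.2, htrans _ _ _ hyz.1⟩) hU ⟨a, haU⟩
      fun y hy => htrans _ _ _ (hUVQ y hy v hvV) hv.2
  have hup_res : {y | Q x y} ∈ residual X :=
    hE.mem_residual_of_subset hup.measurableSet.of_compl
      (fun y z hyz => ⟨fun h => htrans _ _ _ h hyz.1, fun h => htrans _ _ _ h hyz.2⟩) hV ⟨b, hbV⟩
      fun y hy => htrans _ _ _ hu.1 (hUVQ u huU y hy)
  exact not_isMeagre_of_mem_residual (inter_mem hup_res hdown_res) hclass

end GenericErgodicity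

/-- Let `Q` be an `F_σ` quasi-order on a Polish space `X` whose induced
equivalence relation `E_Q` is generically ergodic, and suppose `X` contains an
`E_Q`-class that is dense and has dense complement. Then `E_Q` is meager and `X`
contains a `Q`-antichain of cardinality continuum. -/
theorem meager_and_continuum_antichain_of_Fsigma_quasiOrder
    {X : Type*} [TopologicalSpace X] [PolishSpace X]
    (Q : X → X → Prop)
    (hrefl : ∀ x, Q x x)
    (htrans : ∀ x y z, Q x y → Q y z → Q x z)
    (hFsigma : ∃ F : ℕ → Set (X × X), (∀ i, IsClosed (F i)) ∧
      {p : X × X | Q p.1 p.2} = ⋃ i, F i)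
    (hergodic : ∀ A : Set X, @MeasurableSet X (borel X) A →
      (∀ x y, (Q x y ∧ Q y x) → (x ∈ A ↔ y ∈ A)) →
      IsMeagre A ∨ A ∈ residual X)
    (hdense : ∃ x : X, Dense {y : X | Q x y ∧ Q y x} ∧
      Dense {y : X | ¬ (Q x y ∧ Q y x)}) :
    IsMeagre {p : X × X | Q p.1 p.2 ∧ Q p.2 p.1} ∧
    ∃ f : Set ℕ → X, Injective f ∧
      ∀ I J : Set ℕ, I ≠ J → ¬ Q (f I) (f J) ∧ ¬ Q (f J) (f I) := by
  classical
  obtain ⟨x, hdense, hcodense⟩ := hdense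
  obtain ⟨F, hF, hQF⟩ := hFsigma
  have hQ : IsGδ {p : X × X | Q p.1 p.2}ᶜ := by
    rw [hQF, compl_iUnion]
    exact .iInter_of_isOpen fun i => (hF i).isOpen_compl
  have hR := isMeagre_setOf_of_isGenericallyErgodic htrans hQ hergodic hdense hcodense
  refine ⟨hR.mono fun p hp => hp.1, ?_⟩
  have : Nonempty X := ⟨x⟩
  obtain ⟨f, hf⟩ := hR.exists_nat_bool_pairwise_notMem
  let χ : Set ℕ → ℕ → Bool := fun I n => decide (n ∈ I)
  have hχ : Injective χ := fun I J h => Set.ext fun n => by simpa [χ] using congrFun h n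
  have hanti : ∀ I J, I ≠ J → ¬Q (f (χ I)) (f (χ J)) := fun I J hIJ => hf (hχ.ne hIJ)
  refine ⟨f ∘ χ, fun I J hIJ => ?_, fun I J hIJ => ⟨hanti I J hIJ, hanti J I hIJ.symm⟩⟩
  have hIJ : f (χ I) = f (χ J) := hIJ
  by_contra hne
  exact hanti I J hne (hIJ ▸ hrefl _)
end
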